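/- arXiv:1907.03369 — 2 statements merged into one kernel-verified Lean document; each statement's English description precedes it below -/
import Mathlib

section
/- Let G be a finite abstract simplicial complex with connection matrix L, regarded as a real symmetric matrix. Then the number of positive eigenvalues of L (counted with multiplicity) equals the number b of simplices of G of odd cardinality (even dimension), and the number of negative eigenvalues of L equals the number f of simplices of even cardinality (odd dimension); in particular, no eigenvalue is zero and p(G) - n(G) = b - f = χ(G). -/
open Finset BigOperators

variable {α : Type*} [DecidableEq α]

/-- A finite abstract simplicial complex: a finite collection of nonempty finite
sets closed under taking nonempty subsets. -/
def IsComplex (G : Finset (Finset α)) : Prop :=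
  (∀ x ∈ G, x.Nonempty) ∧ ∀ x ∈ G, ∀ y : Finset α, y.Nonempty → y ⊆ x → y ∈ G

/-- ω(x) = (-1)^(|x|-1). -/
def omegaS (x : Finset α) : ℤ := (-1) ^ (x.card - 1)

/-- Euler characteristic χ(G) = ∑_{x∈G} ω(x). -/
def chi (G : Finset (Finset α)) : ℤ := ∑ x ∈ G, omegaS x

/-- The connection matrix over ℝ: L(x,y)=1 if x and y intersect, 0 otherwise. -/
def connL (G : Finset (Finset α)) : Matrix G G ℝ :=
  fun x y => if (x.1 ∩ y.1).Nonempty then 1 else 0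

/-!
The connection matrix factors as `L = Zᵀ D Z`, where `Z z x = [z ⊆ x]` is the zeta matrix of the
face poset and `D = diag ω`: the entry `(Zᵀ D Z) x y = ∑_{∅ ≠ z ⊆ x ∩ y} ω z` is the Euler
characteristic of the full simplex on `x ∩ y`, hence `1`, or the empty sum `0` when `x ∩ y = ∅`.
Ordered by cardinality, `Z` is unitriangular, so `L` is congruent to `D`, and Sylvester's law of
inertia matches the signs of the eigenvalues of `L` with the signs of `ω`.
-/
open Matrix QuadraticMap QuadraticForm

namespace QuadraticForm

variable {ι κ 𝕜 : Type*} [Fintype ι] [Fintype κ] [Field 𝕜] [LinearOrder 𝕜] [IsStrictOrderedRing 𝕜]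
  {w : ι → 𝕜} {v : κ → 𝕜}

theorem card_pos_eq_of_equivalent
    (h : (weightedSumSquares 𝕜 w).Equivalent (weightedSumSquares 𝕜 v)) :
    #{i | 0 < w i} = #{j | 0 < v j} := by
  classical
  have := sigPos_weightedSumSquares.symm.trans (h.sigPos_eq.trans sigPos_weightedSumSquares)
  simpa [Set.ncard_eq_toFinset_card'] using this

theorem card_neg_eq_of_equivalent
    (h : (weightedSumSquares 𝕜 w).Equivalent (weightedSumSquares 𝕜 v)) :
    #{i | w i < 0} = #{j | v j < 0} := by
  classical
  have := sigNeg_weightedSumSquares.symm.trans (h.sigNeg_eq.trans sigNeg_weightedSumSquares)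
  simpa [Set.ncard_eq_toFinset_card'] using this

theorem card_eq_zero_eq_of_equivalent
    (h : (weightedSumSquares 𝕜 w).Equivalent (weightedSumSquares 𝕜 v)) :
    #{i | w i = 0} = #{j | v j = 0} := by
  classical
  have := (finrank_radical_of_equiv_weightedSumSquares (.refl _)).symm.trans
    (finrank_radical_of_equiv_weightedSumSquares h)
  simpa [Set.ncard_eq_toFinset_card'] using this

end QuadraticForm

namespace Matrix

variable {n R : Type*} [Fintype n] [DecidableEq n] [CommRing R]

theorem toQuadraticForm'_apply (A : Matrix n n R) (v : n → R) :
    A.toQuadraticForm' v = v ⬝ᵥ A *ᵥ v := by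
  simp [toQuadraticForm', toLinearMap₂'_apply']

theorem toQuadraticForm'_diagonal (w : n → R) :
    (diagonal w).toQuadraticForm' = weightedSumSquares R w := by
  ext v
  simp only [toQuadraticForm'_apply, weightedSumSquares_apply, dotProduct, mulVec_diagonal,
    smul_eq_mul]
  exact Finset.sum_congr rfl fun i _ => by ring

theorem toQuadraticForm'_transpose_mul_mul_equivalent {P : Matrix n n R} (hP : IsUnit P)
    (A : Matrix n n R) : (Pᵀ * A * P).toQuadraticForm'.Equivalent A.toQuadraticForm' := by
  have := hP.invertible
  refine ⟨{ toLinearEquiv := P.toLinearEquiv' this, map_app' := fun v => ?_ }⟩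
  simp [toQuadraticForm'_apply, ← mulVec_mulVec, dotProduct_mulVec, vecMul_transpose]

theorem IsHermitian.toQuadraticForm'_equivalent {A : Matrix n n ℝ} (hA : A.IsHermitian) :
    A.toQuadraticForm'.Equivalent (weightedSumSquares ℝ hA.eigenvalues) := by
  have hU : IsUnit (star (hA.eigenvectorUnitary : Matrix n n ℝ)) := by
    simpa using Unitary.isUnit_coe (U := star hA.eigenvectorUnitary)
  rw [← toQuadraticForm'_diagonal]
  conv_lhs => rw [hA.spectral_theorem]
  simpa [star_eq_conjTranspose, conjTranspose_eq_transpose_of_trivial] using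
    toQuadraticForm'_transpose_mul_mul_equivalent hU (diagonal hA.eigenvalues)

theorem IsHermitian.equivalent_of_eq_transpose_mul_diagonal_mul {A P : Matrix n n ℝ} {w : n → ℝ}
    (hA : A.IsHermitian) (hP : IsUnit P) (hAP : A = Pᵀ * diagonal w * P) :
    (weightedSumSquares ℝ hA.eigenvalues).Equivalent (weightedSumSquares ℝ w) := by
  have hPw := toQuadraticForm'_transpose_mul_mul_equivalent hP (diagonal w)
  rw [← hAP, toQuadraticForm'_diagonal] at hPw
  exact hA.toQuadraticForm'_equivalent.symm.trans hPw

end Matrix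

theorem Finset.card_filter_coeSort_univ {β : Type*} (s : Finset β) (p : β → Prop)
    [DecidablePred p] : #{x : s | p x} = #{x ∈ s | p x} := by
  simp [univ_eq_attach, filter_attach]

omit [DecidableEq α] in
theorem omegaS_eq_ite {x : Finset α} (hx : x.Nonempty) :
    omegaS x = if x.card % 2 = 1 then 1 else -1 := by
  obtain ⟨k, hk⟩ := Nat.exists_eq_add_of_lt (card_pos.2 hx)
  rw [omegaS, hk, Nat.add_sub_cancel, neg_one_pow_eq_ite]
  simp [Nat.even_iff, Nat.succ_mod_two_eq_one_iff]

omit [DecidableEq α] in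
theorem omegaS_pos_iff {x : Finset α} (hx : x.Nonempty) : 0 < omegaS x ↔ x.card % 2 = 1 := by
  rw [omegaS_eq_ite hx]; split_ifs <;> simp [*]

omit [DecidableEq α] in
theorem omegaS_neg_iff {x : Finset α} (hx : x.Nonempty) : omegaS x < 0 ↔ x.card % 2 = 0 := by
  rw [omegaS_eq_ite hx]; split_ifs <;> simp_all

omit [DecidableEq α] in
theorem chi_eq_card_sub_card {G : Finset (Finset α)} (hG : ∀ x ∈ G, x.Nonempty) :
    chi G = #{x ∈ G | x.card % 2 = 1} - #{x ∈ G | x.card % 2 = 0} := by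
  rw [chi, sum_congr rfl fun x hx => omegaS_eq_ite (hG x hx), sum_ite]
  simp [sub_eq_add_neg]

theorem sum_omegaS_powerset_filter_nonempty (s : Finset α) :
    ∑ z ∈ s.powerset with z.Nonempty, omegaS z = if s.Nonempty then 1 else 0 := by
  have hfilter : {z ∈ s.powerset | z.Nonempty} = s.powerset.erase ∅ := by
    ext z; simp [nonempty_iff_ne_empty, and_comm]
  have hω : ∀ z ∈ s.powerset.erase ∅, omegaS z = -(-1) ^ z.card := fun z hz => by
    obtain ⟨k, hk⟩ :=
      Nat.exists_eq_add_of_lt (card_pos.2 (nonempty_iff_ne_empty.2 (ne_of_mem_erase hz)))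
    simp [omegaS, hk, pow_succ]
  rw [hfilter, sum_congr rfl hω, sum_neg_distrib, sum_erase_eq_sub (empty_mem_powerset s),
    sum_powerset_neg_one_pow_card]
  by_cases hs : s.Nonempty <;> simp_all [nonempty_iff_ne_empty]

theorem IsComplex.filter_subset_eq {G : Finset (Finset α)} (hG : IsComplex G) {x s : Finset α}
    (hx : x ∈ G) (hs : s ⊆ x) : {z ∈ G | z ⊆ s} = {z ∈ s.powerset | z.Nonempty} := by
  ext z
  simp only [mem_filter, mem_powerset]
  exact ⟨fun h => ⟨h.2, hG.1 z h.1⟩, fun h => ⟨hG.2 x hx z h.2 (h.1.trans hs), h.1⟩⟩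

def subsetMatrix (R : Type*) [Zero R] [One R] (G : Finset (Finset α)) : Matrix G G R :=
  of fun z x => if z.1 ⊆ x.1 then 1 else 0

theorem blockTriangular_subsetMatrix (R : Type*) [Zero R] [One R] (G : Finset (Finset α)) :
    (subsetMatrix R G).BlockTriangular fun z => z.1.card :=
  fun _ _ hlt => if_neg fun hsub => (card_le_card hsub).not_gt hlt

theorem det_subsetMatrix (R : Type*) [CommRing R] (G : Finset (Finset α)) :
    (subsetMatrix R G).det = 1 := by
  rw [(blockTriangular_subsetMatrix R G).det]
  refine prod_eq_one fun k _ => ?_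
  suffices (subsetMatrix R G).toSquareBlock (fun z => z.1.card) k = 1 by rw [this, det_one]
  ext ⟨z, hz⟩ ⟨x, hx⟩
  simp only [toSquareBlock_def, subsetMatrix, of_apply, one_apply, Subtype.mk.injEq]
  refine if_congr ⟨fun hsub => ?_, fun h => h ▸ subset_rfl⟩ rfl rfl
  exact Subtype.ext (eq_of_subset_of_card_le hsub (hx.trans hz.symm).le)

theorem isUnit_subsetMatrix (R : Type*) [CommRing R] (G : Finset (Finset α)) :
    IsUnit (subsetMatrix R G) :=
  (isUnit_iff_isUnit_det _).2 (by simp [det_subsetMatrix])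

theorem connL_eq_transpose_mul_diagonal_mul {G : Finset (Finset α)} (hG : IsComplex G) :
    connL G = (subsetMatrix ℝ G)ᵀ * diagonal (fun z => (omegaS z.1 : ℝ)) * subsetMatrix ℝ G := by
  ext x y
  have h := congrArg (Int.cast (R := ℝ)) (sum_omegaS_powerset_filter_nonempty (x.1 ∩ y.1))
  rw [← hG.filter_subset_eq x.2 inter_subset_left, sum_filter] at h
  push_cast at h
  rw [Matrix.mul_assoc, mul_apply, connL, ← h, ← sum_coe_sort G]
  refine sum_congr rfl fun z _ => ?_
  simp only [diagonal_mul, transpose_apply, subsetMatrix, of_apply]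
  by_cases hx : z.1 ⊆ x.1 <;> by_cases hy : z.1 ⊆ y.1 <;> simp [hx, hy, subset_inter_iff]

/-- Hearing the Euler characteristic: the connection matrix is symmetric
(Hermitian); the number of positive eigenvalues (with multiplicity) equals the
number b of simplices of odd cardinality (even dimension), the number of
negative eigenvalues equals the number f of simplices of even cardinality (odd
dimension), no eigenvalue is zero, and p(G) - n(G) = χ(G). -/
theorem hearing_euler_characteristic (G : Finset (Finset α)) (hG : IsComplex G)
    (hL : (connL G).IsHermitian) :
    ((Finset.univ.filter (fun x : G => 0 < hL.eigenvalues x)).card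
        = (G.filter (fun x => x.card % 2 = 1)).card) ∧
    ((Finset.univ.filter (fun x : G => hL.eigenvalues x < 0)).card
        = (G.filter (fun x => x.card % 2 = 0)).card) ∧
    (∀ x : G, hL.eigenvalues x ≠ 0) ∧
    ((Finset.univ.filter (fun x : G => 0 < hL.eigenvalues x)).card : ℤ)
      - ((Finset.univ.filter (fun x : G => hL.eigenvalues x < 0)).card : ℤ)
      = chi G := by
  have hcongruent := hL.equivalent_of_eq_transpose_mul_diagonal_mul (isUnit_subsetMatrix ℝ G)
    (connL_eq_transpose_mul_diagonal_mul hG)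
  have hpos : #{x : G | 0 < hL.eigenvalues x} = #{x ∈ G | x.card % 2 = 1} := by
    rw [card_pos_eq_of_equivalent hcongruent, ← card_filter_coeSort_univ G]
    simp only [Int.cast_pos]
    exact congrArg card (filter_congr fun x _ => omegaS_pos_iff (hG.1 x x.2))
  have hneg : #{x : G | hL.eigenvalues x < 0} = #{x ∈ G | x.card % 2 = 0} := by
    rw [card_neg_eq_of_equivalent hcongruent, ← card_filter_coeSort_univ G]
    simp only [Int.cast_lt_zero]
    exact congrArg card (filter_congr fun x _ => omegaS_neg_iff (hG.1 x x.2))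
  have hzero : ∀ x : G, hL.eigenvalues x ≠ 0 := by
    simpa [omegaS] using card_eq_zero_eq_of_equivalent hcongruent
  refine ⟨hpos, hneg, hzero, ?_⟩
  rw [hpos, hneg, chi_eq_card_sub_card hG.1]
end

section
/- Invariance of Euler characteristic under Barycentric refinement: let G be a finite abstract simplicial complex and let G₁ be its Barycentric refinement, the simplicial complex whose simplices are the nonempty chains in G (nonempty subsets of G totally ordered by strict inclusion). Then χ(G₁) = χ(G), i.e. ∑_C (-1)^(|C|-1) = ∑_{x∈G} (-1)^(|x|-1), where the left sum runs over all nonempty chains C in (G, ⊊). -/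
open Finset BigOperators

variable {α : Type*} [DecidableEq α]

/-- The nonempty chains in G: nonempty subsets of G totally ordered by
inclusion.  These are the simplices of the Barycentric refinement G₁. -/
def chainsOf (G : Finset (Finset α)) : Finset (Finset (Finset α)) :=
  G.powerset.filter (fun C => C.Nonempty ∧ ∀ a ∈ C, ∀ b ∈ C, a ⊆ b ∨ b ⊆ a)

lemma neg_pow_pred {n : ℕ} (h : 0 < n) : (-1 : ℤ) ^ (n - 1) = -(-1) ^ n := by
  obtain ⟨m, rfl⟩ := Nat.exists_eq_succ_of_ne_zero h.ne'
  simp [pow_succ]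

/-- strictly smaller simplices -/
def below (G : Finset (Finset α)) (x : Finset α) : Finset (Finset α) :=
  G.filter (fun y => y ⊂ x)

/-- chains, including the empty chain -/
def allChains (S : Finset (Finset α)) : Finset (Finset (Finset α)) :=
  S.powerset.filter (fun C => ∀ a ∈ C, ∀ b ∈ C, a ⊆ b ∨ b ⊆ a)

lemma mem_chainsOf {G C : Finset (Finset α)} : C ∈ chainsOf G ↔
    C ⊆ G ∧ C.Nonempty ∧ ∀ a ∈ C, ∀ b ∈ C, a ⊆ b ∨ b ⊆ a := by
  simp [chainsOf, and_assoc]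

lemma mem_allChains {S C : Finset (Finset α)} : C ∈ allChains S ↔
    C ⊆ S ∧ ∀ a ∈ C, ∀ b ∈ C, a ⊆ b ∨ b ⊆ a := by
  simp [allChains]

lemma chain_max {G C : Finset (Finset α)} (hC : C ∈ chainsOf G) :
    ∃ m ∈ C, ∀ a ∈ C, a ⊆ m := by
  obtain ⟨hsub, hne, htot⟩ := mem_chainsOf.mp hC
  obtain ⟨m, hm, hmax⟩ := C.exists_max_image (fun y => y.card) hne
  refine ⟨m, hm, fun a ha => ?_⟩
  rcases htot a ha m hm with h | h
  · exact h
  · exact (Finset.eq_of_subset_of_card_le h (hmax a ha)) ▸ Finset.Subset.refl _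

lemma notmem_below {G : Finset (Finset α)} {x : Finset α} {C : Finset (Finset α)}
    (hC : C ⊆ below G x) : x ∉ C := by
  intro hx
  have := hC hx
  simp only [below, mem_filter] at this
  exact absurd this.2 (lt_irrefl x)

lemma chains_decomp (G : Finset (Finset α)) :
    chainsOf G = G.biUnion (fun x => (allChains (below G x)).image (insert x)) := by
  ext C
  simp only [mem_biUnion, mem_image]
  constructor
  · intro hC
    obtain ⟨hsub, hne, htot⟩ := mem_chainsOf.mp hC
    obtain ⟨m, hm, hmax⟩ := chain_max hC
    refine ⟨m, hsub hm, C.erase m, ?_, ?_⟩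
    · rw [mem_allChains]
      constructor
      · intro a ha
        have ham := Finset.mem_of_mem_erase ha
        have hne' : a ≠ m := Finset.ne_of_mem_erase ha
        simp only [below, mem_filter]
        exact ⟨hsub ham, Finset.ssubset_iff_subset_ne.mpr ⟨hmax a ham, hne'⟩⟩
      · intro a ha b hb
        exact htot a (Finset.mem_of_mem_erase ha) b (Finset.mem_of_mem_erase hb)
    · exact Finset.insert_erase hm
  · rintro ⟨x, hx, C', hC', rfl⟩
    obtain ⟨hsub, htot⟩ := mem_allChains.mp hC'
    have hbel : ∀ a ∈ C', a ⊂ x := by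
      intro a ha
      have := hsub ha
      simp only [below, mem_filter] at this
      exact this.2
    rw [mem_chainsOf]
    refine ⟨?_, ⟨x, mem_insert_self _ _⟩, ?_⟩
    · intro a ha
      rcases mem_insert.mp ha with rfl | ha
      · exact hx
      · exact (mem_filter.mp (hsub ha)).1
    · intro a ha b hb
      rcases mem_insert.mp ha with ha' | ha' <;> rcases mem_insert.mp hb with hb' | hb'
      · exact Or.inl (by rw [ha', hb'])
      · exact Or.inr (by rw [ha']; exact (hbel b hb').1)
      · exact Or.inl (by rw [hb']; exact (hbel a ha').1)
      · exact htot a ha' b hb'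

lemma below_complex {G : Finset (Finset α)} (hG : IsComplex G) (x : Finset α) :
    IsComplex (below G x) := by
  obtain ⟨h1, h2⟩ := hG
  constructor
  · intro y hy; exact h1 y (mem_filter.mp hy).1
  · intro y hy z hzne hzy
    obtain ⟨hyG, hyx⟩ := mem_filter.mp hy
    exact mem_filter.mpr ⟨h2 y hyG z hzne hzy, lt_of_le_of_lt hzy hyx⟩

lemma below_eq {G : Finset (Finset α)} (hG : IsComplex G) {x : Finset α} (hx : x ∈ G) :
    below G x = (x.powerset.filter (fun y => y.Nonempty)).erase x := by
  ext y
  simp only [below, mem_filter, mem_erase, mem_powerset]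
  constructor
  · intro ⟨hyG, hyx⟩
    exact ⟨hyx.ne, hyx.1, hG.1 y hyG⟩
  · intro ⟨hne, hsub, hyne⟩
    exact ⟨hG.2 x hx y hyne hsub, Finset.ssubset_iff_subset_ne.mpr ⟨hsub, hne⟩⟩

lemma chi_below {G : Finset (Finset α)} (hG : IsComplex G) {x : Finset α} (hx : x ∈ G) :
    chi (below G x) = 1 + (-1) ^ x.card := by
  have hxne : x.Nonempty := hG.1 x hx
  rw [below_eq hG hx]
  have hxmem : x ∈ x.powerset.filter (fun y => y.Nonempty) := by
    simp [hxne]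
  rw [chi, Finset.sum_erase_eq_sub hxmem]
  have key : ∑ y ∈ x.powerset.filter (fun y => y.Nonempty), omegaS y = 1 := by
    have h0 : ∑ y ∈ x.powerset, (-1 : ℤ) ^ y.card = 0 :=
      Finset.sum_powerset_neg_one_pow_card_of_nonempty hxne
    have hsplit : x.powerset = insert ∅ (x.powerset.filter (fun y => y.Nonempty)) := by
      ext y
      simp only [mem_insert, mem_filter, mem_powerset]
      constructor
      · intro hy
        rcases y.eq_empty_or_nonempty with rfl | hne
        · exact Or.inl rfl
        · exact Or.inr ⟨hy, hne⟩
      · rintro (rfl | ⟨hy, _⟩)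
        · exact empty_subset _
        · exact hy
    rw [hsplit, Finset.sum_insert (by simp)] at h0
    have hcong : ∑ y ∈ x.powerset.filter (fun y => y.Nonempty), omegaS y
        = ∑ y ∈ x.powerset.filter (fun y => y.Nonempty), -((-1 : ℤ) ^ y.card) := by
      apply Finset.sum_congr rfl
      intro y hy
      have hyne : y.Nonempty := (mem_filter.mp hy).2
      rw [omegaS, neg_pow_pred (Finset.card_pos.mpr hyne)]
    rw [hcong, Finset.sum_neg_distrib]
    simp only [Finset.card_empty, pow_zero] at h0
    linarith
  rw [key, omegaS, neg_pow_pred (Finset.card_pos.mpr hxne)]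
  ring

lemma allChains_eq (S : Finset (Finset α)) :
    allChains S = insert ∅ (chainsOf S) := by
  ext C
  simp only [mem_insert, mem_allChains, mem_chainsOf]
  constructor
  · intro ⟨hsub, htot⟩
    rcases C.eq_empty_or_nonempty with rfl | hne
    · exact Or.inl rfl
    · exact Or.inr ⟨hsub, hne, htot⟩
  · rintro (rfl | ⟨hsub, _, htot⟩)
    · exact ⟨empty_subset _, by simp⟩
    · exact ⟨hsub, htot⟩

lemma key_ind : ∀ n : ℕ, ∀ G : Finset (Finset α), G.card ≤ n → IsComplex G →
    ∑ C ∈ chainsOf G, (-1 : ℤ) ^ (C.card - 1) = chi G := by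
  intro n
  induction n with
  | zero =>
    intro G hcard _
    have hG : G = ∅ := Finset.card_eq_zero.mp (Nat.le_zero.mp hcard)
    subst hG
    have h : chainsOf (∅ : Finset (Finset α)) = ∅ := by
      ext C
      simp only [mem_chainsOf, Finset.subset_empty, Finset.notMem_empty, iff_false]
      rintro ⟨rfl, hne, -⟩
      exact absurd hne (by simp)
    rw [h]
    simp [chi]
  | succ n ih =>
    intro G hcard hG
    rw [chains_decomp G]
    rw [Finset.sum_biUnion ?disj]
    case disj =>
      intro x hx y hy hxy
      simp only [Finset.disjoint_left]
      intro C hCx hCy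
      simp only [mem_image] at hCx hCy
      obtain ⟨C₁, hC₁, rfl⟩ := hCx
      obtain ⟨C₂, hC₂, hEq⟩ := hCy
      have hyx : y ∈ insert x C₁ := by rw [← hEq]; exact mem_insert_self _ _
      have hxy2 : x ∈ insert y C₂ := by rw [hEq]; exact mem_insert_self _ _
      rcases mem_insert.mp hyx with h | h
      · exact hxy h.symm
      · have hy_x : y ⊂ x := (mem_filter.mp ((mem_allChains.mp hC₁).1 h)).2
        rcases mem_insert.mp hxy2 with h' | h'
        · exact hxy h'
        · have hx_y : x ⊂ y := (mem_filter.mp ((mem_allChains.mp hC₂).1 h')).2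
          exact absurd (hx_y.trans hy_x) (lt_irrefl x)
    have step : ∀ x ∈ G,
        ∑ C ∈ (allChains (below G x)).image (insert x), (-1 : ℤ) ^ (C.card - 1) = omegaS x := by
      intro x hx
      have hxnot : ∀ C' ∈ allChains (below G x), x ∉ C' := fun C' hC' =>
        notmem_below (mem_allChains.mp hC').1
      rw [Finset.sum_image ?inj]
      case inj =>
        intro C₁ hC₁ C₂ hC₂ hEq
        have h1 := hxnot C₁ hC₁
        have h2 := hxnot C₂ hC₂
        rw [← Finset.erase_insert h1, ← Finset.erase_insert h2, hEq]
      have hcards : ∀ C' ∈ allChains (below G x),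
          (-1 : ℤ) ^ ((insert x C').card - 1) = (-1) ^ C'.card := by
        intro C' hC'
        rw [Finset.card_insert_of_notMem (hxnot C' hC'), Nat.add_sub_cancel]
      rw [Finset.sum_congr rfl hcards, allChains_eq,
        Finset.sum_insert (by simp [mem_chainsOf])]
      have hcong : ∑ C' ∈ chainsOf (below G x), (-1 : ℤ) ^ C'.card
          = ∑ C' ∈ chainsOf (below G x), -((-1 : ℤ) ^ (C'.card - 1)) := by
        apply Finset.sum_congr rfl
        intro C' hC'
        have hne : C'.Nonempty := (mem_chainsOf.mp hC').2.1
        rw [neg_pow_pred (Finset.card_pos.mpr hne), neg_neg]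
      have hsmall : (below G x).card ≤ n := by
        have hss : below G x ⊂ G := by
          refine Finset.ssubset_iff_of_subset (Finset.filter_subset _ _) |>.mpr ?_
          refine ⟨x, hx, ?_⟩
          simp only [below, mem_filter, not_and]
          exact fun _ h => absurd h (lt_irrefl x)
        have := Finset.card_lt_card hss
        omega
      have hih := ih (below G x) hsmall (below_complex hG x)
      rw [hcong, Finset.sum_neg_distrib, hih, chi_below hG hx, omegaS,
        neg_pow_pred (Finset.card_pos.mpr (hG.1 x hx))]
      simp only [Finset.card_empty, pow_zero]
      ring
    rw [Finset.sum_congr rfl step]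
    rfl

/-- Euler characteristic is invariant under Barycentric refinement:
χ(G₁) = ∑_C (-1)^(|C|-1) over nonempty chains C in G equals χ(G). -/
theorem barycentric_invariance (G : Finset (Finset α)) (hG : IsComplex G) :
    ∑ C ∈ chainsOf G, (-1 : ℤ) ^ (C.card - 1) = chi G := by
  exact key_ind G.card G le_rfl hG
end
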